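/- For the complete binary tree B_n on 2^{n+1}−1 vertices with n ≥ 2, aw(B_n,3) = 4. -/
import Mathlib


namespace AntiVDW

/-- `v 0, v 1, …, v (k-1)` is a `k`-term arithmetic progression in `G`:
consecutive vertices are at a common finite distance `d`. -/
def IsAPSeq {V : Type*} (G : SimpleGraph V) (k : ℕ) (v : ℕ → V) : Prop :=
  ∃ d : ℕ, ∀ i, i + 1 < k → G.Reachable (v i) (v (i + 1)) ∧ G.dist (v i) (v (i + 1)) = d

/-- `G` contains a `k`-AP that is rainbow under the coloring `c`. -/
def HasRainbowAP {V α : Type*} (G : SimpleGraph V) (k : ℕ) (c : V → α) : Prop :=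
  ∃ v : ℕ → V, IsAPSeq G k v ∧ ∀ i j, i < k → j < k → i ≠ j → c (v i) ≠ c (v j)

/-- The anti-van der Waerden number: the least positive `r` such that every
exact (surjective) `r`-coloring of `G` contains a rainbow `k`-AP. -/
noncomputable def aw {V : Type*} (G : SimpleGraph V) (k : ℕ) : ℕ :=
  sInf {r : ℕ | 0 < r ∧ ∀ c : V → Fin r, Function.Surjective c → HasRainbowAP G k c}

/-- Eccentricity of a vertex. -/
noncomputable def ecc {V : Type*} [Fintype V] (G : SimpleGraph V) (v : V) : ℕ :=
  Finset.univ.sup fun u => G.dist v u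

/-- Radius of a graph. -/
noncomputable def rad {V : Type*} [Fintype V] [Nonempty V] (G : SimpleGraph V) : ℕ :=
  Finset.univ.inf' Finset.univ_nonempty (ecc G)

/-- Diameter of a graph. -/
noncomputable def diam {V : Type*} [Fintype V] (G : SimpleGraph V) : ℕ :=
  Finset.univ.sup (ecc G)

/-- The complete binary tree of height `n`: level `i` has `2^i` vertices, and the
vertex `j` of level `i+1` is a child of vertex `j / 2` of level `i`. -/
def completeBinaryTree (n : ℕ) : SimpleGraph (Σ i : Fin (n + 1), Fin (2 ^ (i : ℕ))) :=
  SimpleGraph.fromRel fun a b => (a.1 : ℕ) + 1 = (b.1 : ℕ) ∧ (b.2 : ℕ) / 2 = (a.2 : ℕ)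

abbrev Vtx (n : ℕ) := Σ i : Fin (n + 1), Fin (2 ^ (i : ℕ))

variable {n : ℕ}

def lvl (x : Vtx n) : ℕ := x.1
def idx (x : Vtx n) : ℕ := x.2

lemma lvl_le (x : Vtx n) : lvl x ≤ n := Nat.lt_succ_iff.mp x.1.2
lemma idx_lt (x : Vtx n) : idx x < 2 ^ lvl x := x.2.2

def pre (x : Vtx n) (k : ℕ) : ℕ := idx x / 2 ^ (lvl x - k)

lemma pre_lvl (x : Vtx n) : pre x (lvl x) = idx x := by simp [pre]

lemma pre_zero (x : Vtx n) : pre x 0 = 0 := by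
  simp only [pre, Nat.sub_zero]
  exact Nat.div_eq_of_lt (idx_lt x)

lemma pre_lt (x : Vtx n) (k : ℕ) : pre x k < 2 ^ k := by
  rcases le_or_gt k (lvl x) with h | h
  · apply Nat.div_lt_of_lt_mul
    rw [← pow_add]
    have : lvl x - k + k = lvl x := by omega
    rw [this]; exact idx_lt x
  · have : lvl x - k = 0 := by omega
    simp only [pre, this, pow_zero, Nat.div_one]
    exact lt_of_lt_of_le (idx_lt x) (Nat.pow_le_pow_right (by norm_num) (by omega))

lemma pre_pre (x : Vtx n) {k k' : ℕ} (h : k' ≤ k) (hk : k ≤ lvl x) :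
    pre x k / 2 ^ (k - k') = pre x k' := by
  simp only [pre, Nat.div_div_eq_div_mul, ← pow_add]
  congr 2
  omega

def agrees (x y : Vtx n) (k : ℕ) : Prop :=
  k ≤ lvl x ∧ k ≤ lvl y ∧ pre x k = pre y k

instance (x y : Vtx n) : DecidablePred (agrees x y) := fun _ => by
  unfold agrees; infer_instance

lemma agrees_zero (x y : Vtx n) : agrees x y 0 :=
  ⟨Nat.zero_le _, Nat.zero_le _, by rw [pre_zero, pre_zero]⟩

lemma agrees_mono {x y : Vtx n} {k k' : ℕ} (h : agrees x y k) (hk : k' ≤ k) :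
    agrees x y k' := by
  obtain ⟨h1, h2, h3⟩ := h
  refine ⟨le_trans hk h1, le_trans hk h2, ?_⟩
  rw [← pre_pre x hk h1, ← pre_pre y hk h2, h3]

def meet (x y : Vtx n) : ℕ := Nat.findGreatest (agrees x y) (min (lvl x) (lvl y))

lemma meet_agrees (x y : Vtx n) : agrees x y (meet x y) :=
  Nat.findGreatest_spec (Nat.zero_le _) (agrees_zero x y)

lemma le_meet {x y : Vtx n} {k : ℕ} (h : agrees x y k) : k ≤ meet x y :=
  Nat.le_findGreatest (le_min h.1 h.2.1) h

lemma meet_le_left (x y : Vtx n) : meet x y ≤ lvl x := (meet_agrees x y).1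
lemma meet_le_right (x y : Vtx n) : meet x y ≤ lvl y := (meet_agrees x y).2.1

lemma meet_comm (x y : Vtx n) : meet x y = meet y x := by
  apply le_antisymm
  · exact le_meet (by obtain ⟨a, b, c⟩ := meet_agrees x y; exact ⟨b, a, c.symm⟩)
  · exact le_meet (by obtain ⟨a, b, c⟩ := meet_agrees y x; exact ⟨b, a, c.symm⟩)

lemma meet_eq_of {x y : Vtx n} {k : ℕ} (h : agrees x y k)
    (h' : ¬ agrees x y (k + 1)) : meet x y = k := by
  refine le_antisymm ?_ (le_meet h)
  by_contra hc
  push_neg at hc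
  exact h' (agrees_mono (meet_agrees x y) (by omega))

/-- the model distance -/
def model (x y : Vtx n) : ℕ := (lvl x - meet x y) + (lvl y - meet x y)

lemma model_comm (x y : Vtx n) : model x y = model y x := by
  unfold model; rw [meet_comm]; omega

lemma meet_self (x : Vtx n) : meet x x = lvl x :=
  le_antisymm (meet_le_left x x) (le_meet ⟨le_refl _, le_refl _, rfl⟩)

lemma model_self (x : Vtx n) : model x x = 0 := by
  unfold model; rw [meet_self]; omega

-- vertex constructor
def vtx (i j : ℕ) (hi : i ≤ n) (hj : j < 2 ^ i) : Vtx n :=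
  ⟨⟨i, by omega⟩, ⟨j, hj⟩⟩

@[simp] lemma lvl_vtx {i j : ℕ} (hi : i ≤ n) (hj : j < 2 ^ i) : lvl (vtx i j hi hj) = i := rfl
@[simp] lemma idx_vtx {i j : ℕ} (hi : i ≤ n) (hj : j < 2 ^ i) : idx (vtx i j hi hj) = j := rfl

lemma vtx_ext {x y : Vtx n} (h1 : lvl x = lvl y) (h2 : idx x = idx y) : x = y := by
  obtain ⟨⟨i, hi⟩, ⟨j, hj⟩⟩ := x
  obtain ⟨⟨i', hi'⟩, ⟨j', hj'⟩⟩ := y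
  simp only [lvl, idx] at h1 h2
  subst h1
  simp only [Fin.mk.injEq] at h2 ⊢
  subst h2
  rfl

def anc (x : Vtx n) (k : ℕ) : Vtx n :=
  vtx (min k (lvl x)) (pre x (min k (lvl x))) (le_trans (min_le_right _ _) (lvl_le x)) (pre_lt _ _)

lemma lvl_anc {x : Vtx n} {k : ℕ} (h : k ≤ lvl x) : lvl (anc x k) = k := by
  simp [anc, min_eq_left h]
lemma idx_anc {x : Vtx n} {k : ℕ} (h : k ≤ lvl x) : idx (anc x k) = pre x k := by
  simp [anc, min_eq_left h]

lemma adj_iff {x y : Vtx n} :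
    (completeBinaryTree n).Adj x y ↔
      ((lvl x + 1 = lvl y ∧ idx y / 2 = idx x) ∨ (lvl y + 1 = lvl x ∧ idx x / 2 = idx y)) := by
  constructor
  · rintro ⟨_, h | h⟩
    · exact Or.inl h
    · exact Or.inr h
  · intro h
    have hne : x ≠ y := by
      rintro rfl
      rcases h with ⟨h1, _⟩ | ⟨h1, _⟩ <;> omega
    exact ⟨hne, h⟩


open SimpleGraph

lemma adj_anc {x : Vtx n} {k : ℕ} (h : k + 1 ≤ lvl x) :
    (completeBinaryTree n).Adj (anc x k) (anc x (k + 1)) := by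
  rw [adj_iff]
  left
  rw [lvl_anc (by omega), lvl_anc h, idx_anc h, idx_anc (show k ≤ lvl x by omega)]
  refine ⟨rfl, ?_⟩
  have := pre_pre x (show k ≤ k + 1 by omega) h
  simpa using this

lemma anc_lvl_self (x : Vtx n) : anc x (lvl x) = x := by
  apply vtx_ext
  · rw [lvl_anc (le_refl _)]
  · rw [idx_anc (le_refl _), pre_lvl]

lemma exists_walk_anc (x : Vtx n) :
    ∀ d k, k + d = lvl x →
      ∃ w : (completeBinaryTree n).Walk (anc x k) x, w.length = d := by
  intro d
  induction d with
  | zero =>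
    intro k h
    have hx : anc x k = x := by
      have : k = lvl x := by omega
      rw [this, anc_lvl_self]
    exact ⟨(Walk.nil : (completeBinaryTree n).Walk x x).copy hx.symm rfl, by simp⟩
  | succ d ih =>
    intro k h
    obtain ⟨w, hw⟩ := ih (k + 1) (by omega)
    exact ⟨Walk.cons (adj_anc (by omega)) w, by simp [hw]⟩

lemma anc_meet_eq (x y : Vtx n) : anc x (meet x y) = anc y (meet x y) := by
  obtain ⟨h1, h2, h3⟩ := meet_agrees x y
  apply vtx_ext
  · rw [lvl_anc h1, lvl_anc h2]
  · rw [idx_anc h1, idx_anc h2, h3]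

lemma exists_walk_model (x y : Vtx n) :
    ∃ w : (completeBinaryTree n).Walk x y, w.length = model x y := by
  obtain ⟨w1, hw1⟩ := exists_walk_anc x (lvl x - meet x y) (meet x y) (by
    have := meet_le_left x y; omega)
  obtain ⟨w2, hw2⟩ := exists_walk_anc y (lvl y - meet x y) (meet x y) (by
    have := meet_le_right x y; omega)
  refine ⟨w1.reverse.append (w2.copy (anc_meet_eq x y).symm rfl), ?_⟩
  simp only [Walk.length_append, Walk.length_reverse, Walk.length_copy, hw1, hw2]
  rfl

lemma reachable_cbt (x y : Vtx n) : (completeBinaryTree n).Reachable x y := by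
  obtain ⟨w, _⟩ := exists_walk_model x y
  exact ⟨w⟩


lemma pre_child {x y : Vtx n} (hl : lvl y = lvl x + 1) (hp : idx y / 2 = idx x)
    {k : ℕ} (hk : k ≤ lvl x) : pre y k = pre x k := by
  have h1 : lvl y - k = (lvl x - k) + 1 := by omega
  simp only [pre, h1, pow_succ, Nat.div_div_eq_div_mul]
  rw [mul_comm, ← Nat.div_div_eq_div_mul, hp]

lemma meet_child (u x y : Vtx n) (hl : lvl y = lvl x + 1) (hp : idx y / 2 = idx x) :
    meet u y = meet u x ∨ (meet u y = lvl x + 1 ∧ meet u x = lvl x) := by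
  have key : ∀ k, k ≤ lvl x → (agrees u y k ↔ agrees u x k) := by
    intro k hk
    unfold agrees
    rw [pre_child hl hp hk]
    omega
  rcases le_or_gt (meet u y) (lvl x) with h | h
  · left
    apply le_antisymm
    · exact le_meet ((key _ h).mp (meet_agrees u y))
    · exact le_meet ((key _ (meet_le_right u x)).mpr (meet_agrees u x))
  · have h2 : meet u y = lvl x + 1 := by
      have := meet_le_right u y; omega
    right
    refine ⟨h2, ?_⟩
    apply le_antisymm (meet_le_right u x)
    apply le_meet
    apply (key _ (le_refl _)).mp
    exact agrees_mono (meet_agrees u y) (by omega)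

lemma model_le_adj (u : Vtx n) {x y : Vtx n} (h : (completeBinaryTree n).Adj x y) :
    model u y ≤ model u x + 1 := by
  have main : ∀ a b : Vtx n, lvl b = lvl a + 1 → idx b / 2 = idx a →
      (model u b = model u a + 1 ∨ (model u b + 1 = model u a)) := by
    intro a b hl hp
    have hma := meet_le_left u a
    have hma' := meet_le_right u a
    have hmb := meet_le_left u b
    have hmb' := meet_le_right u b
    rcases meet_child u a b hl hp with hc | ⟨hc1, hc2⟩
    · left; unfold model; omega
    · right; unfold model; omega
  rw [adj_iff] at h
  rcases h with ⟨hl, hp⟩ | ⟨hl, hp⟩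
  · rcases main x y hl.symm hp with h' | h' <;> omega
  · rcases main y x hl.symm hp with h' | h' <;> omega

lemma model_le_walk (u : Vtx n) {x y : Vtx n} (w : (completeBinaryTree n).Walk x y) :
    model u y ≤ model u x + w.length := by
  induction w with
  | nil => simp
  | cons h p ih =>
    rename_i a b c
    have := model_le_adj u h
    simp only [Walk.length_cons]
    omega

theorem dist_eq_model (x y : Vtx n) :
    (completeBinaryTree n).dist x y = model x y := by
  apply le_antisymm
  · obtain ⟨w, hw⟩ := exists_walk_model x y
    exact hw ▸ SimpleGraph.dist_le w
  · obtain ⟨w, hw⟩ := (reachable_cbt x y).exists_walk_length_eq_dist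
    have := model_le_walk x w
    rw [hw, model_self] at this
    simpa [model_comm] using this

section NoRainbow

variable {α : Type*} {c : Vtx n → α}

lemma rainbow_of_equidistant (u z v : Vtx n) (hd : model u z = model z v)
    (h1 : c u ≠ c z) (h2 : c z ≠ c v) (h3 : c u ≠ c v) :
    HasRainbowAP (completeBinaryTree n) 3 c := by
  refine ⟨fun i => if i = 0 then u else if i = 1 then z else v, ⟨model u z, ?_⟩, ?_⟩
  · intro i hi
    have : i = 0 ∨ i = 1 := by omega
    rcases this with rfl | rfl
    · simpa [dist_eq_model] using reachable_cbt u z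
    · norm_num
      simpa [dist_eq_model, hd] using reachable_cbt z v
  · intro i j hi hj hij
    have hi' : i = 0 ∨ i = 1 ∨ i = 2 := by omega
    have hj' : j = 0 ∨ j = 1 ∨ j = 2 := by omega
    rcases hi' with rfl | rfl | rfl <;> rcases hj' with rfl | rfl | rfl <;>
      simp_all <;> tauto

/-- the root vertex -/
def rt : Vtx n := vtx 0 0 (Nat.zero_le n) (by norm_num)

@[simp] lemma lvl_rt : lvl (rt : Vtx n) = 0 := rfl

lemma model_rt (x : Vtx n) : model rt x = lvl x := by
  have h : meet (rt : Vtx n) x = 0 := Nat.le_zero.mp (meet_le_left rt x)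
  unfold model
  rw [h]
  simp

variable (hnr : ¬ HasRainbowAP (completeBinaryTree n) 3 c)

include hnr in
lemma forced (u z v : Vtx n) (hd : model u z = model z v) (huv : c u ≠ c v) :
    c z = c u ∨ c z = c v := by
  by_contra hc
  push_neg at hc
  exact hnr (rainbow_of_equidistant u z v hd (Ne.symm hc.1) hc.2 huv)

include hnr in
/-- level lemma: two same-level vertices with distinct colors, both different from
the root color, are impossible -/
lemma level_lemma (u v : Vtx n) (hl : lvl u = lvl v) (huv : c u ≠ c v)
    (hu : c u ≠ c rt) (hv : c v ≠ c rt) : False := by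
  have hd : model u rt = model rt v := by
    rw [model_comm, model_rt, model_rt, hl]
  rcases forced hnr u rt v hd huv with h | h
  · exact hu h.symm
  · exact hv h.symm

end NoRainbow

lemma pre_anc {x : Vtx n} {k k' : ℕ} (h' : k' ≤ k) (h : k ≤ lvl x) :
    pre (anc x k) k' = pre x k' := by
  unfold pre
  rw [lvl_anc h, idx_anc h]
  exact pre_pre x h' h

lemma mul_pow_div {q s t : ℕ} (h : s ≤ t) : q * 2 ^ s / 2 ^ t = q / 2 ^ (t - s) := by
  have ht : (2:ℕ) ^ t = 2 ^ s * 2 ^ (t - s) := by rw [← pow_add]; congr 1; omega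
  rw [ht, mul_comm (q) _, Nat.mul_div_mul_left _ _ (by positivity)]

section Stripe

variable {α : Type*} {c : Vtx n → α}
variable (hnr : ¬ HasRainbowAP (completeBinaryTree n) 3 c)

include hnr in
/-- The midpoint/shadow ("stripe") lemma. -/
lemma stripe {u v : Vtx n} (hA : c u ≠ c rt) (hB : c v ≠ c rt) (hAB : c u ≠ c v)
    (hab : lvl u < lvl v) (hpar : lvl u % 2 = lvl v % 2) :
    ∃ m, 2 * m ≤ lvl u + lvl v ∧ m < lvl v ∧
      ∀ L, m ≤ L → L ≤ n → ∃ z : Vtx n, lvl z = L ∧ (c z = c u ∨ c z = c v) := by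
  set a := lvl u with ha
  set b := lvl v with hb
  set μ := meet u v with hμ
  have hμa : μ ≤ a := meet_le_left u v
  have hμb : μ ≤ b := meet_le_right u v
  set m := μ + (b - a) / 2 with hm
  have hm2 : 2 * m = 2 * μ + (b - a) := by omega
  have hmb : m < b := by omega
  have hma : μ + 1 ≤ m := by omega
  have hmn : m + 1 ≤ n := by have := lvl_le v; omega
  refine ⟨m, by omega, hmb, ?_⟩
  -- the flipped child index
  set p := pre v (m + 1) with hp
  set q := (if p % 2 = 0 then p + 1 else p - 1) with hq
  have hplt : p < 2 ^ (m + 1) := pre_lt v (m + 1)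
  have hpow2 : 2 ^ (m+1) % 2 = 0 := by rw [pow_succ]; omega
  have hqfacts : q / 2 = p / 2 ∧ q ≠ p ∧ q < 2 ^ (m + 1) := by
    rcases Nat.mod_two_eq_zero_or_one p with h | h
    · rw [hq, if_pos h]
      refine ⟨by omega, by omega, by omega⟩
    · rw [hq, if_neg (by omega)]
      refine ⟨by omega, by omega, by omega⟩
  obtain ⟨hqp2, hqne, hqlt⟩ := hqfacts
  intro L hLm hLn
  set Z : Vtx n := vtx n (q * 2 ^ (n - (m+1))) (le_refl n) (by
    calc q * 2 ^ (n - (m+1)) < 2 ^ (m+1) * 2 ^ (n - (m+1)) :=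
          (Nat.mul_lt_mul_right (pow_pos (by norm_num) _)).mpr hqlt
      _ = 2 ^ n := by rw [← pow_add]; congr 1; omega) with hZ
  have hZlvl : lvl Z = n := rfl
  have hZpre : ∀ k, k ≤ m + 1 → pre Z k = q / 2 ^ (m + 1 - k) := by
    intro k hk
    show q * 2 ^ (n - (m+1)) / 2 ^ (n - k) = _
    rw [mul_pow_div (by omega)]
    have : n - k - (n - (m+1)) = m + 1 - k := by omega
    rw [this]
  have hZpre_v : ∀ k, k ≤ m → pre Z k = pre v k := by
    intro k hk
    rw [hZpre k (by omega)]
    have h1 : q / 2 ^ (m + 1 - k) = (q / 2) / 2 ^ (m - k) := by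
      rw [Nat.div_div_eq_div_mul, ← pow_succ']
      congr 2
      omega
    have h2 : (p / 2) / 2 ^ (m - k) = p / 2 ^ (m + 1 - k) := by
      rw [Nat.div_div_eq_div_mul, ← pow_succ']
      congr 2
      omega
    rw [h1, hqp2, h2, hp]
    exact pre_pre v (show k ≤ m + 1 by omega) (show m + 1 ≤ lvl v by omega)
  set z : Vtx n := anc Z L with hz
  have hzL : L ≤ lvl Z := by rw [hZlvl]; exact hLn
  have hzlvl : lvl z = L := lvl_anc hzL
  have hzpre : ∀ k, k ≤ L → pre z k = pre Z k := fun k hk => pre_anc hk hzL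
  -- meet z v = m
  have hmeet_zv : meet z v = m := by
    rcases eq_or_lt_of_le hLm with hLeq | hLgt
    · apply le_antisymm
      · have := meet_le_left z v; omega
      · apply le_meet
        refine ⟨by omega, by omega, ?_⟩
        rw [hzpre m (by omega), hZpre_v m (le_refl m)]
    · apply meet_eq_of
      · refine ⟨by omega, by omega, ?_⟩
        rw [hzpre m (by omega), hZpre_v m (le_refl m)]
      · rintro ⟨h1, h2, h3⟩
        rw [hzpre (m+1) (by omega), hZpre (m+1) (le_refl _)] at h3
        simp only [Nat.sub_self, pow_zero, Nat.div_one] at h3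
        exact hqne h3
  -- meet z u = μ
  have hpre_vu : ∀ k, k ≤ μ → pre v k = pre u k := by
    intro k hk
    exact ((agrees_mono (meet_agrees u v) hk).2.2).symm
  have hmeet_zu : meet z u = μ := by
    rcases eq_or_lt_of_le hμa with hμeq | hμlt
    · apply le_antisymm
      · have := meet_le_right z u; omega
      · apply le_meet
        refine ⟨by omega, by omega, ?_⟩
        rw [hzpre μ (by omega), hZpre_v μ (by omega), hpre_vu μ (le_refl _)]
    · apply meet_eq_of
      · refine ⟨by omega, by omega, ?_⟩
        rw [hzpre μ (by omega), hZpre_v μ (by omega), hpre_vu μ (le_refl _)]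
      · rintro ⟨h1, h2, h3⟩
        rw [hzpre (μ+1) (by omega), hZpre_v (μ+1) (by omega)] at h3
        have hnag : ¬ agrees u v (μ + 1) := by
          intro hagr
          have := le_meet hagr
          omega
        exact hnag ⟨by omega, by omega, h3.symm⟩
  -- equidistance
  have hd : model u z = model z v := by
    unfold model
    rw [meet_comm u z, hmeet_zu, hmeet_zv, hzlvl]
    omega
  refine ⟨z, hzlvl, ?_⟩
  rcases forced hnr u z v hd hAB with h | h
  · exact Or.inl h
  · exact Or.inr h

end Stripe

section Abstract

variable {α : Type*}

/-- Core of the combinatorial argument, assuming `γ3` owns the deepest occupied level. -/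
lemma combinatorialCore (n : ℕ) (A γ1 γ2 γ3 : α) (occ : α → ℕ → Prop)
    (hd12 : γ1 ≠ γ2) (hd13 : γ1 ≠ γ3) (hd23 : γ2 ≠ γ3)
    (hA1 : γ1 ≠ A) (hA2 : γ2 ≠ A) (hA3 : γ3 ≠ A)
    (hocc_le : ∀ γ L, occ γ L → L ≤ n)
    (huniq : ∀ γ γ' L, γ ≠ A → γ' ≠ A → occ γ L → occ γ' L → γ = γ')
    (hstripe : ∀ x y P Q, x ≠ A → y ≠ A → x ≠ y → occ x P → occ y Q → P < Q →
      P % 2 = Q % 2 →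
      ∃ m, 2 * m ≤ P + Q ∧ m < Q ∧ ∀ L, m ≤ L → L ≤ n → ∃ w, (w = x ∨ w = y) ∧ occ w L)
    (N1 N2 N3 : ℕ)
    (hN3n : N3 ≤ n) (hN1n : N1 ≤ n) (hN2n : N2 ≤ n)
    (ho1 : occ γ1 N1) (ho2 : occ γ2 N2) (ho3 : occ γ3 N3)
    (hmax1 : ∀ L, occ γ1 L → L ≤ N1) (hmax2 : ∀ L, occ γ2 L → L ≤ N2)
    (h13 : N1 < N3) (h23 : N2 < N3) : False := by
  -- symmetric version of the stripe hypothesis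
  have hstripe' : ∀ x y P Q, x ≠ A → y ≠ A → x ≠ y → occ x P → occ y Q → P ≠ Q →
      P % 2 = Q % 2 →
      ∃ m, 2 * m ≤ P + Q ∧ (m < P ∨ m < Q) ∧
        ∀ L, m ≤ L → L ≤ n → ∃ w, (w = x ∨ w = y) ∧ occ w L := by
    intro x y P Q hx hy hxy hP hQ hPQ hpar
    rcases lt_or_gt_of_ne hPQ with h | h
    · obtain ⟨m, hm1, hm2, hm3⟩ := hstripe x y P Q hx hy hxy hP hQ h hpar
      exact ⟨m, hm1, Or.inr hm2, hm3⟩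
    · obtain ⟨m, hm1, hm2, hm3⟩ := hstripe y x Q P hy hx (Ne.symm hxy) hQ hP h hpar.symm
      exact ⟨m, by omega, Or.inl hm2, fun L h1 h2 => by
        obtain ⟨w, hw, hw2⟩ := hm3 L h1 h2
        exact ⟨w, hw.symm, hw2⟩⟩
  -- claim 1 : parity separation of γ1 and γ2 levels
  have claim1 : ∀ P Q, occ γ1 P → occ γ2 Q → P % 2 ≠ Q % 2 := by
    intro P Q hP hQ hpar
    have hPQ : P ≠ Q := by
      intro h
      exact hd12 (huniq γ1 γ2 P hA1 hA2 hP (h ▸ hQ))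
    obtain ⟨m, hm1, hm2, hm3⟩ := hstripe' γ1 γ2 P Q hA1 hA2 hd12 hP hQ hPQ hpar
    have hmN3 : m ≤ N3 := by
      have := hmax1 P hP
      have := hmax2 Q hQ
      omega
    obtain ⟨w, hw, hw2⟩ := hm3 N3 hmN3 hN3n
    rcases hw with h | h
    · exact hd13 (huniq γ1 γ3 N3 hA1 hA3 (h ▸ hw2) ho3)
    · exact hd23 (huniq γ2 γ3 N3 hA2 hA3 (h ▸ hw2) ho3)
  set ε := N1 % 2 with hε
  have hεN2 : N2 % 2 ≠ ε := fun h => claim1 N1 N2 ho1 ho2 (by omega)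
  have hpar1 : ∀ P, occ γ1 P → P % 2 = ε := by
    intro P hP
    have := claim1 P N2 hP ho2
    omega
  have hpar2 : ∀ Q, occ γ2 Q → Q % 2 ≠ ε := by
    intro Q hQ
    have := claim1 N1 Q ho1 hQ
    omega
  -- claim 2 : γ3 occupies levels of both parities
  have claim2 : (∃ R, occ γ3 R ∧ R % 2 = ε) ∧ (∃ R, occ γ3 R ∧ R % 2 ≠ ε) := by
    constructor
    · by_contra hc
      push_neg at hc
      -- all γ3 levels have parity ≠ ε ; use pair (γ2 , γ3) at N2 N3
      have hp3 : N3 % 2 ≠ ε := hc N3 ho3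
      have hN23 : N2 ≠ N3 := by omega
      obtain ⟨m, hm1, hm2, hm3⟩ := hstripe' γ2 γ3 N2 N3 hA2 hA3 hd23 ho2 ho3 hN23 (by omega)
      -- pick L ∈ {m, m+1} with parity ε
      have hmn : m < n := by rcases hm2 with h | h <;> omega
      obtain ⟨L, hL1, hL2, hL3⟩ : ∃ L, m ≤ L ∧ L ≤ n ∧ L % 2 = ε := by
        refine ⟨if m % 2 = ε then m else m + 1, ?_, ?_, ?_⟩ <;> split <;> omega
      obtain ⟨w, hw, hw2⟩ := hm3 L hL1 hL2
      rcases hw with h | h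
      · exact hpar2 L (h ▸ hw2) hL3
      · exact hc L (h ▸ hw2) hL3
    · by_contra hc
      push_neg at hc
      have hp3 : N3 % 2 = ε := hc N3 ho3
      have hN13 : N1 ≠ N3 := by omega
      obtain ⟨m, hm1, hm2, hm3⟩ := hstripe' γ1 γ3 N1 N3 hA1 hA3 hd13 ho1 ho3 hN13 (by omega)
      have hmn : m < n := by rcases hm2 with h | h <;> omega
      obtain ⟨L, hL1, hL2, hL3⟩ : ∃ L, m ≤ L ∧ L ≤ n ∧ L % 2 ≠ ε := by
        refine ⟨if m % 2 = ε then m + 1 else m, ?_, ?_, ?_⟩ <;> split <;> omega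
      obtain ⟨w, hw, hw2⟩ := hm3 L hL1 hL2
      rcases hw with h | h
      · exact hL3 (hpar1 L (h ▸ hw2))
      · exact hL3 (hc L (h ▸ hw2))
  obtain ⟨⟨Rε, hRε, hRεp⟩, ⟨Rβ, hRβ, hRβp⟩⟩ := claim2
  -- the invariant
  set Inv : ℕ → Prop := fun h => h < n ∧ ∀ L, h ≤ L → L ≤ n → occ γ3 L with hInv
  -- initialization
  have init : ∃ h, Inv h := by
    have hN1Rε : N1 ≠ Rε := fun h => hd13 (huniq γ1 γ3 N1 hA1 hA3 ho1 (h ▸ hRε))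
    obtain ⟨ma, hma1, hma2, hma3⟩ := hstripe' γ1 γ3 N1 Rε hA1 hA3 hd13 ho1 hRε hN1Rε (by omega)
    have hN2Rβ : N2 ≠ Rβ := fun h => hd23 (huniq γ2 γ3 N2 hA2 hA3 ho2 (h ▸ hRβ))
    obtain ⟨mb, hmb1, hmb2, hmb3⟩ := hstripe' γ2 γ3 N2 Rβ hA2 hA3 hd23 ho2 hRβ hN2Rβ (by omega)
    have hRεn : Rε ≤ n := hocc_le _ _ hRε
    have hRβn : Rβ ≤ n := hocc_le _ _ hRβ
    refine ⟨max ma mb, ⟨by omega, ?_⟩⟩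
    intro L hL1 hL2
    by_cases hLp : L % 2 = ε
    · obtain ⟨w, hw, hw2⟩ := hmb3 L (by omega) hL2
      rcases hw with h | h
      · exact absurd hLp (hpar2 L (h ▸ hw2))
      · exact h ▸ hw2
    · obtain ⟨w, hw, hw2⟩ := hma3 L (by omega) hL2
      rcases hw with h | h
      · exact absurd (hpar1 L (h ▸ hw2)) hLp
      · exact h ▸ hw2
  -- the descent : no h can satisfy the invariant
  have main : ∀ h, Inv h → False := by
    intro h
    induction h using Nat.strong_induction_on with
    | _ h IH =>
      intro hInv
      obtain ⟨hhn, hall⟩ := hInv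
      by_cases hk1 : h ≤ N1
      · exact hd13 (huniq γ1 γ3 N1 hA1 hA3 ho1 (hall N1 hk1 hN1n))
      by_cases hk2 : h ≤ N2
      · exact hd23 (huniq γ2 γ3 N2 hA2 hA3 ho2 (hall N2 hk2 hN2n))
      push_neg at hk1 hk2
      obtain ⟨R2, hR2a, hR2b, hR2c⟩ : ∃ R, h ≤ R ∧ R ≤ h + 1 ∧ R % 2 = ε := by
        refine ⟨if h % 2 = ε then h else h + 1, ?_, ?_, ?_⟩ <;> split <;> omega
      obtain ⟨R1, hR1a, hR1b, hR1c⟩ : ∃ R, h ≤ R ∧ R ≤ h + 1 ∧ R % 2 ≠ ε := by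
        refine ⟨if h % 2 = ε then h + 1 else h, ?_, ?_, ?_⟩ <;> split <;> omega
      have hoR2 : occ γ3 R2 := hall R2 hR2a (by omega)
      have hoR1 : occ γ3 R1 := hall R1 hR1a (by omega)
      -- stripe from (γ1, γ3 at R2)
      obtain ⟨mc, hmc1, hmc2, hmc3⟩ :=
        hstripe γ1 γ3 N1 R2 hA1 hA3 hd13 ho1 hoR2 (by omega) (by omega)
      by_cases hcN2 : mc ≤ N2
      · obtain ⟨w, hw, hw2⟩ := hmc3 N2 hcN2 hN2n
        rcases hw with hh | hh
        · exact hd12 (huniq γ1 γ2 N2 hA1 hA2 (hh ▸ hw2) ho2)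
        · exact hd23 (huniq γ2 γ3 N2 hA2 hA3 ho2 (hh ▸ hw2))
      push_neg at hcN2
      -- stripe from (γ2, γ3 at R1)
      obtain ⟨md, hmd1, hmd2, hmd3⟩ :=
        hstripe γ2 γ3 N2 R1 hA2 hA3 hd23 ho2 hoR1 (by omega) (by omega)
      by_cases hdN1 : md ≤ N1
      · obtain ⟨w, hw, hw2⟩ := hmd3 N1 hdN1 hN1n
        rcases hw with hh | hh
        · exact hd12 (huniq γ1 γ2 N1 hA1 hA2 ho1 (hh ▸ hw2))
        · exact hd13 (huniq γ1 γ3 N1 hA1 hA3 ho1 (hh ▸ hw2))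
      push_neg at hdN1
      -- descend
      have hstep1 : h ≥ N1 + 2 := by omega
      have hstep2 : h ≥ N2 + 2 := by omega
      have hmch : mc < h := by omega
      have hmdh : md < h := by omega
      refine IH (max mc md) (by omega) ⟨by omega, ?_⟩
      intro L hL1 hL2
      by_cases hLp : L % 2 = ε
      · obtain ⟨w, hw, hw2⟩ := hmd3 L (by omega) hL2
        rcases hw with hh | hh
        · exact absurd hLp (hpar2 L (hh ▸ hw2))
        · exact hh ▸ hw2
      · obtain ⟨w, hw, hw2⟩ := hmc3 L (by omega) hL2
        rcases hw with hh | hh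
        · exact absurd (hpar1 L (hh ▸ hw2)) hLp
        · exact hh ▸ hw2
  obtain ⟨h, hh⟩ := init
  exact main h hh


lemma combinatorial (n : ℕ) (A γ1 γ2 γ3 : α) (occ : α → ℕ → Prop)
    (hd12 : γ1 ≠ γ2) (hd13 : γ1 ≠ γ3) (hd23 : γ2 ≠ γ3)
    (hA1 : γ1 ≠ A) (hA2 : γ2 ≠ A) (hA3 : γ3 ≠ A)
    (hocc_le : ∀ γ L, occ γ L → L ≤ n)
    (huniq : ∀ γ γ' L, γ ≠ A → γ' ≠ A → occ γ L → occ γ' L → γ = γ')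
    (hstripe : ∀ x y P Q, x ≠ A → y ≠ A → x ≠ y → occ x P → occ y Q → P < Q →
      P % 2 = Q % 2 →
      ∃ m, 2 * m ≤ P + Q ∧ m < Q ∧ ∀ L, m ≤ L → L ≤ n → ∃ w, (w = x ∨ w = y) ∧ occ w L)
    (hex1 : ∃ L, occ γ1 L) (hex2 : ∃ L, occ γ2 L) (hex3 : ∃ L, occ γ3 L) : False := by
  classical
  set N1 := Nat.findGreatest (occ γ1) n with hN1
  set N2 := Nat.findGreatest (occ γ2) n with hN2
  set N3 := Nat.findGreatest (occ γ3) n with hN3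
  have ho1 : occ γ1 N1 := by
    obtain ⟨L, hL⟩ := hex1
    exact Nat.findGreatest_spec (hocc_le _ _ hL) hL
  have ho2 : occ γ2 N2 := by
    obtain ⟨L, hL⟩ := hex2
    exact Nat.findGreatest_spec (hocc_le _ _ hL) hL
  have ho3 : occ γ3 N3 := by
    obtain ⟨L, hL⟩ := hex3
    exact Nat.findGreatest_spec (hocc_le _ _ hL) hL
  have hmax1 : ∀ L, occ γ1 L → L ≤ N1 := fun L hL => Nat.le_findGreatest (hocc_le _ _ hL) hL
  have hmax2 : ∀ L, occ γ2 L → L ≤ N2 := fun L hL => Nat.le_findGreatest (hocc_le _ _ hL) hL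
  have hmax3 : ∀ L, occ γ3 L → L ≤ N3 := fun L hL => Nat.le_findGreatest (hocc_le _ _ hL) hL
  have hN1n : N1 ≤ n := Nat.findGreatest_le n
  have hN2n : N2 ≤ n := Nat.findGreatest_le n
  have hN3n : N3 ≤ n := Nat.findGreatest_le n
  have ne12 : N1 ≠ N2 := fun h => hd12 (huniq γ1 γ2 N1 hA1 hA2 ho1 (h ▸ ho2))
  have ne13 : N1 ≠ N3 := fun h => hd13 (huniq γ1 γ3 N1 hA1 hA3 ho1 (h ▸ ho3))
  have ne23 : N2 ≠ N3 := fun h => hd23 (huniq γ2 γ3 N2 hA2 hA3 ho2 (h ▸ ho3))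
  have htri : (N1 < N3 ∧ N2 < N3) ∨ (N1 < N2 ∧ N3 < N2) ∨ (N2 < N1 ∧ N3 < N1) := by omega
  rcases htri with ⟨ha, hb⟩ | ⟨ha, hb⟩ | ⟨ha, hb⟩
  · exact combinatorialCore n A γ1 γ2 γ3 occ hd12 hd13 hd23 hA1 hA2 hA3 hocc_le huniq hstripe
      N1 N2 N3 hN3n hN1n hN2n ho1 ho2 ho3 hmax1 hmax2 ha hb
  · exact combinatorialCore n A γ1 γ3 γ2 occ hd13 hd12 (Ne.symm hd23) hA1 hA3 hA2 hocc_le huniq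
      hstripe N1 N3 N2 hN2n hN1n hN3n ho1 ho3 ho2 hmax1 hmax3 ha hb
  · exact combinatorialCore n A γ2 γ3 γ1 occ hd23 (Ne.symm hd12) (Ne.symm hd13) hA2 hA3 hA1
      hocc_le huniq hstripe N2 N3 N1 hN1n hN2n hN3n ho2 ho3 ho1 hmax2 hmax3 ha hb

end Abstract

section PartA

lemma fin4_three (A : Fin 4) : ∃ a b c : Fin 4,
    a ≠ b ∧ a ≠ c ∧ b ≠ c ∧ a ≠ A ∧ b ≠ A ∧ c ≠ A := by
  revert A; decide

theorem partA (c : Vtx n → Fin 4) (hsurj : Function.Surjective c) :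
    HasRainbowAP (completeBinaryTree n) 3 c := by
  by_contra hnr
  obtain ⟨γ1, γ2, γ3, hd12, hd13, hd23, hA1, hA2, hA3⟩ := fin4_three (c rt)
  set occ : Fin 4 → ℕ → Prop := fun γ L => ∃ x : Vtx n, c x = γ ∧ lvl x = L with hocc
  apply combinatorial n (c rt) γ1 γ2 γ3 occ hd12 hd13 hd23 hA1 hA2 hA3
  · rintro γ L ⟨x, _, rfl⟩
    exact lvl_le x
  · rintro γ γ' L hγ hγ' ⟨u, rfl, hu2⟩ ⟨v, rfl, hv2⟩
    by_contra hne
    exact level_lemma hnr u v (by omega) hne hγ hγ'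
  · rintro x y P Q hx hy hxy ⟨u, rfl, hu2⟩ ⟨v, rfl, hv2⟩ hPQ hpar
    obtain ⟨m, hm1, hm2, hm3⟩ := stripe hnr hx hy hxy (by omega) (by rw [hu2, hv2]; exact hpar)
    refine ⟨m, by omega, by omega, ?_⟩
    intro L hL1 hL2
    obtain ⟨z, hz1, hz2⟩ := hm3 L hL1 hL2
    exact ⟨c z, hz2, z, rfl, hz1⟩
  · obtain ⟨x, hx⟩ := hsurj γ1
    exact ⟨lvl x, x, hx, rfl⟩
  · obtain ⟨x, hx⟩ := hsurj γ2
    exact ⟨lvl x, x, hx, rfl⟩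
  · obtain ⟨x, hx⟩ := hsurj γ3
    exact ⟨lvl x, x, hx, rfl⟩

end PartA

section PartB

variable (hn : 2 ≤ n)

/-- The extremal 3-coloring: color 1 on the right half of level n-1,
color 2 on the left half of level n, color 0 elsewhere. -/
def cB (n : ℕ) : Vtx n → Fin 3 := fun x =>
  if lvl x = n - 1 ∧ 2 ^ (n - 2) ≤ idx x then 1
  else if lvl x = n ∧ idx x < 2 ^ (n - 1) then 2
  else 0

lemma model_parity (x y : Vtx n) : model x y % 2 = (lvl x + lvl y) % 2 := by
  have h1 := meet_le_left x y
  have h2 := meet_le_right x y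
  unfold model
  omega

lemma cB_one {x : Vtx n} (h : cB n x = 1) : lvl x = n - 1 ∧ 2 ^ (n - 2) ≤ idx x := by
  by_contra hc
  unfold cB at h
  rw [if_neg hc] at h
  split at h <;> simp at h

lemma cB_two {x : Vtx n} (h : cB n x = 2) : lvl x = n ∧ idx x < 2 ^ (n - 1) := by
  by_contra hc
  unfold cB at h
  rcases Classical.em (lvl x = n - 1 ∧ 2 ^ (n - 2) ≤ idx x) with h1 | h1
  · rw [if_pos h1] at h; simp at h
  · rw [if_neg h1, if_neg hc] at h; simp at h

lemma cB_zero {x : Vtx n} (h : cB n x = 0) :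
    ¬(lvl x = n - 1 ∧ 2 ^ (n - 2) ≤ idx x) ∧ ¬(lvl x = n ∧ idx x < 2 ^ (n - 1)) := by
  constructor <;> intro hc
  · unfold cB at h; rw [if_pos hc] at h; simp at h
  · unfold cB at h
    rcases Classical.em (lvl x = n - 1 ∧ 2 ^ (n - 2) ≤ idx x) with h1 | h1
    · rw [if_pos h1] at h; simp at h
    · rw [if_neg h1, if_pos hc] at h; simp at h

include hn in
lemma meet_BC {b cc : Vtx n} (hb : lvl b = n - 1 ∧ 2 ^ (n - 2) ≤ idx b)
    (hc : lvl cc = n ∧ idx cc < 2 ^ (n - 1)) : meet b cc = 0 := by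
  apply meet_eq_of (agrees_zero b cc)
  rintro ⟨h1, h2, h3⟩
  have hpb : pre b 1 = 1 := by
    unfold pre
    rw [hb.1]
    have h4 : n - 1 - 1 = n - 2 := by omega
    rw [h4]
    have h5 : idx b < 2 ^ (n - 1) := hb.1 ▸ idx_lt b
    have h6 : (2:ℕ) ^ (n - 1) = 2 ^ (n - 2) * 2 := by rw [← pow_succ]; congr 1; omega
    rw [Nat.div_eq_sub_div (by positivity) hb.2] at *
    have : (idx b - 2 ^ (n - 2)) / 2 ^ (n - 2) = 0 := Nat.div_eq_of_lt (by omega)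
    omega
  have hpc : pre cc 1 = 0 := by
    unfold pre
    rw [hc.1]
    exact Nat.div_eq_of_lt (by
      have : (2:ℕ) ^ (n - 1) ≤ 2 ^ (n - 1) := le_refl _
      calc idx cc < 2 ^ (n - 1) := hc.2
        _ ≤ 2 ^ (n - 1) := le_refl _)
  rw [hpb, hpc] at h3
  exact one_ne_zero h3

include hn in
lemma model_BC {b cc : Vtx n} (hb : lvl b = n - 1 ∧ 2 ^ (n - 2) ≤ idx b)
    (hc : lvl cc = n ∧ idx cc < 2 ^ (n - 1)) : model b cc = 2 * n - 1 := by
  unfold model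
  rw [meet_BC hn hb hc, hb.1, hc.1]
  omega

include hn in
theorem partB : ¬ HasRainbowAP (completeBinaryTree n) 3 (cB n) := by
  rintro ⟨v, ⟨d, hAP⟩, hrb⟩
  obtain ⟨_, hd01⟩ := hAP 0 (by norm_num)
  obtain ⟨_, hd12⟩ := hAP 1 (by norm_num)
  rw [dist_eq_model] at hd01 hd12
  have heq : model (v 0) (v 1) = model (v 1) (v 2) := by rw [hd01, hd12]
  have h01 := hrb 0 1 (by norm_num) (by norm_num) (by norm_num)
  have h02 := hrb 0 2 (by norm_num) (by norm_num) (by norm_num)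
  have h12 := hrb 1 2 (by norm_num) (by norm_num) (by norm_num)
  -- the three colors are exactly {0,1,2}
  -- case on the color of the middle vertex
  -- generic facts
  have hmidz : ∀ z b cc : Vtx n, cB n z = 0 → cB n b = 1 → cB n cc = 2 →
      model b z = model z cc → False := by
    intro z b cc hz hb hc hmod
    obtain ⟨hb1, hb2⟩ := cB_one hb
    obtain ⟨hc1, hc2⟩ := cB_two hc
    have p1 := model_parity b z
    have p2 := model_parity z cc
    rw [hmod] at p1
    rw [hb1] at p1
    rw [hc1] at p2
    omega
  have hmidb : ∀ z b cc : Vtx n, cB n z = 0 → cB n b = 1 → cB n cc = 2 →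
      model z b = model b cc → False := by
    intro z b cc hz hb hc hmod
    obtain ⟨hb1, hb2⟩ := cB_one hb
    obtain ⟨hc1, hc2⟩ := cB_two hc
    rw [model_BC hn ⟨hb1, hb2⟩ ⟨hc1, hc2⟩] at hmod
    have hmz := meet_le_left z b
    have hmzb := meet_le_right z b
    have hlz := lvl_le z
    -- model z b = lvl z + (n-1) - 2 meet = 2n - 1 → meet = 0 ∧ lvl z = n
    have hzn : lvl z = n ∧ meet z b = 0 := by
      unfold model at hmod
      constructor <;> omega
    -- z is at level n; color 0 means idx z ≥ 2^(n-1)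
    have hzidx : 2 ^ (n - 1) ≤ idx z := by
      by_contra hcon
      exact (cB_zero hz).2 ⟨hzn.1, by omega⟩
    -- but then z and b agree at level 1
    have hpz : pre z 1 = 1 := by
      unfold pre
      rw [hzn.1]
      have h6 : (2:ℕ) ^ n = 2 ^ (n - 1) * 2 := by rw [← pow_succ]; congr 1; omega
      have h5 : idx z < 2 ^ n := by have := idx_lt z; rw [hzn.1] at this; exact this
      rw [show n - 1 = n - 1 from rfl]
      rw [Nat.div_eq_sub_div (by positivity) hzidx]
      have : (idx z - 2 ^ (n - 1)) / 2 ^ (n - 1) = 0 := Nat.div_eq_of_lt (by omega)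
      omega
    have hpb : pre b 1 = 1 := by
      unfold pre
      rw [hb1]
      have h4 : n - 1 - 1 = n - 2 := by omega
      rw [h4]
      have h5 : idx b < 2 ^ (n - 1) := by have := idx_lt b; rw [hb1] at this; exact this
      have h6 : (2:ℕ) ^ (n - 1) = 2 ^ (n - 2) * 2 := by rw [← pow_succ]; congr 1; omega
      rw [Nat.div_eq_sub_div (by positivity) hb2]
      have : (idx b - 2 ^ (n - 2)) / 2 ^ (n - 2) = 0 := Nat.div_eq_of_lt (by omega)
      omega
    have : 1 ≤ meet z b := le_meet ⟨by omega, by omega, by rw [hpz, hpb]⟩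
    omega
  have hmidc : ∀ z b cc : Vtx n, cB n z = 0 → cB n b = 1 → cB n cc = 2 →
      model b cc = model cc z → False := by
    intro z b cc hz hb hc hmod
    obtain ⟨hb1, hb2⟩ := cB_one hb
    obtain ⟨hc1, hc2⟩ := cB_two hc
    rw [model_BC hn ⟨hb1, hb2⟩ ⟨hc1, hc2⟩] at hmod
    have hmz := meet_le_left cc z
    have hmzb := meet_le_right cc z
    have hlz := lvl_le z
    have hzn : lvl z = n - 1 ∧ meet cc z = 0 := by
      unfold model at hmod
      rw [hc1] at hmod
      constructor <;> omega
    have hzidx : idx z < 2 ^ (n - 2) := by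
      by_contra hcon
      exact (cB_zero hz).1 ⟨hzn.1, by omega⟩
    have hpz : pre z 1 = 0 := by
      unfold pre
      rw [hzn.1]
      apply Nat.div_eq_of_lt
      calc idx z < 2 ^ (n - 2) := hzidx
        _ ≤ 2 ^ (n - 1 - 1) := by apply Nat.pow_le_pow_right <;> omega
    have hpc : pre cc 1 = 0 := by
      unfold pre
      rw [hc1]
      apply Nat.div_eq_of_lt
      calc idx cc < 2 ^ (n - 1) := hc2
        _ ≤ 2 ^ (n - 1) := le_refl _
    have : 1 ≤ meet cc z := le_meet ⟨by omega, by omega, by rw [hpz, hpc]⟩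
    omega
  -- enumerate the 6 color patterns
  have hfin : ∀ t : Fin 3, t = 0 ∨ t = 1 ∨ t = 2 := by decide
  have heq' : model (v 2) (v 1) = model (v 1) (v 0) := by
    rw [model_comm (v 2) (v 1), model_comm (v 1) (v 0)]
    exact heq.symm
  rcases hfin (cB n (v 0)) with h0 | h0 | h0 <;>
    rcases hfin (cB n (v 1)) with h1 | h1 | h1 <;>
      rcases hfin (cB n (v 2)) with h2 | h2 | h2
  · exact h01 (by rw [h0, h1])
  · exact h01 (by rw [h0, h1])
  · exact h01 (by rw [h0, h1])
  · exact h02 (by rw [h0, h2])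
  · exact h12 (by rw [h1, h2])
  · exact hmidb (v 0) (v 1) (v 2) h0 h1 h2 heq
  · exact h02 (by rw [h0, h2])
  · exact hmidc (v 0) (v 2) (v 1) h0 h2 h1 heq'
  · exact h12 (by rw [h1, h2])
  · exact h12 (by rw [h1, h2])
  · exact h02 (by rw [h0, h2])
  · exact hmidz (v 1) (v 0) (v 2) h1 h0 h2 heq
  · exact h01 (by rw [h0, h1])
  · exact h01 (by rw [h0, h1])
  · exact h01 (by rw [h0, h1])
  · exact hmidc (v 2) (v 0) (v 1) h2 h0 h1 heq
  · exact h02 (by rw [h0, h2])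
  · exact h12 (by rw [h1, h2])
  · exact h12 (by rw [h1, h2])
  · exact hmidz (v 1) (v 2) (v 0) h1 h2 h0 heq'
  · exact h02 (by rw [h0, h2])
  · exact hmidb (v 2) (v 1) (v 0) h2 h1 h0 heq'
  · exact h12 (by rw [h1, h2])
  · exact h02 (by rw [h0, h2])
  · exact h01 (by rw [h0, h1])
  · exact h01 (by rw [h0, h1])
  · exact h01 (by rw [h0, h1])

end PartB

section Assemble

lemma fin3_cases (t : Fin 3) : t = 0 ∨ t = 1 ∨ t = 2 := by revert t; decide
lemma fin2_cases (t : Fin 2) : t = 0 ∨ t = 1 := by revert t; decide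

variable (hn : 2 ≤ n)

include hn in
lemma cB_surjective : Function.Surjective (cB n) := by
  intro t
  have hb0 : (2:ℕ) ^ (n - 2) < 2 ^ (n - 1) := Nat.pow_lt_pow_right (by norm_num) (by omega)
  have hc0 : (0:ℕ) < 2 ^ n := by positivity
  rcases fin3_cases t with rfl | rfl | rfl
  · refine ⟨rt, ?_⟩
    unfold cB
    rw [if_neg, if_neg]
    · rintro ⟨h1, -⟩
      rw [lvl_rt] at h1
      omega
    · rintro ⟨h1, -⟩
      rw [lvl_rt] at h1
      omega
  · refine ⟨vtx (n-1) (2^(n-2)) (by omega) hb0, ?_⟩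
    unfold cB
    rw [if_pos ⟨lvl_vtx _ _, by rw [idx_vtx]⟩]
  · refine ⟨vtx n 0 (le_refl n) hc0, ?_⟩
    unfold cB
    rw [if_neg, if_pos ⟨lvl_vtx _ _, by rw [idx_vtx]; positivity⟩]
    rintro ⟨h1, -⟩
    rw [lvl_vtx] at h1
    omega

lemma notMem_one : ¬ (1 ∈ {r : ℕ | 0 < r ∧ ∀ c : Vtx n → Fin r, Function.Surjective c →
    HasRainbowAP (completeBinaryTree n) 3 c}) := by
  rintro ⟨-, h⟩
  obtain ⟨v, -, hrb⟩ := h (fun _ => 0) (fun t => ⟨rt, Subsingleton.elim _ _⟩)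
  exact hrb 0 1 (by norm_num) (by norm_num) (by norm_num) (Subsingleton.elim _ _)

include hn in
lemma notMem_two : ¬ (2 ∈ {r : ℕ | 0 < r ∧ ∀ c : Vtx n → Fin r, Function.Surjective c →
    HasRainbowAP (completeBinaryTree n) 3 c}) := by
  rintro ⟨-, h⟩
  have hc0 : (0:ℕ) < 2 ^ n := by positivity
  set w : Vtx n := vtx n 0 (le_refl n) hc0 with hw
  have hwrt : w ≠ rt := by
    intro hcon
    have h2 : lvl w = lvl (rt : Vtx n) := congrArg lvl hcon
    rw [lvl_rt, hw, lvl_vtx] at h2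
    omega
  set c : Vtx n → Fin 2 := fun x => if x = rt then 0 else 1 with hc
  have hsurj : Function.Surjective c := by
    intro t
    rcases fin2_cases t with rfl | rfl
    · exact ⟨rt, by simp [hc]⟩
    · exact ⟨w, by simp [hc, hwrt]⟩
  obtain ⟨v, -, hrb⟩ := h c hsurj
  have h01 := hrb 0 1 (by norm_num) (by norm_num) (by norm_num)
  have h02 := hrb 0 2 (by norm_num) (by norm_num) (by norm_num)
  have h12 := hrb 1 2 (by norm_num) (by norm_num) (by norm_num)
  revert h01 h02 h12
  generalize c (v 0) = a
  generalize c (v 1) = b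
  generalize c (v 2) = d
  revert a b d
  decide

include hn in
lemma notMem_three : ¬ (3 ∈ {r : ℕ | 0 < r ∧ ∀ c : Vtx n → Fin r, Function.Surjective c →
    HasRainbowAP (completeBinaryTree n) 3 c}) := by
  rintro ⟨-, h⟩
  exact partB hn (h (cB n) (cB_surjective hn))

include hn in
theorem aw_eq_four : aw (completeBinaryTree n) 3 = 4 := by
  have h4 : 4 ∈ {r : ℕ | 0 < r ∧ ∀ c : Vtx n → Fin r, Function.Surjective c →
      HasRainbowAP (completeBinaryTree n) 3 c} := ⟨by norm_num, fun c hc => partA c hc⟩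
  have hne : Set.Nonempty {r : ℕ | 0 < r ∧ ∀ c : Vtx n → Fin r, Function.Surjective c →
      HasRainbowAP (completeBinaryTree n) 3 c} := ⟨4, h4⟩
  have hmem := Nat.sInf_mem hne
  apply le_antisymm (Nat.sInf_le h4)
  by_contra hcon
  push_neg at hcon
  interval_cases h : sInf {r : ℕ | 0 < r ∧ ∀ c : Vtx n → Fin r, Function.Surjective c →
      HasRainbowAP (completeBinaryTree n) 3 c}
  · obtain ⟨h0, -⟩ := hmem
    exact absurd h0 (by norm_num)
  · exact notMem_one hmem
  · exact notMem_two hn hmem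
  · exact notMem_three hn hmem

end Assemble

theorem stmt_10 (n : ℕ) (hn : 2 ≤ n) :
    aw (completeBinaryTree n) 3 = 4 := by
  exact aw_eq_four hn

end AntiVDW
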